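/- Let B be an annihilator nilpotent skew brace. Then the following are equivalent: (1) B is finitely generated as a skew brace; (2) the group (B,+) is finitely generated; (3) the group (B,∘) is finitely generated. -/

import Mathlib

/-- A skew brace: a type with two group structures `(B,+)` and `(B,∘)`
(the multiplicative group is written with `*`) sharing the same underlying set,
such that `a ∘ (b + c) = a ∘ b - a + a ∘ c`. -/
class SkewBrace (B : Type*) extends AddGroup B, Group B where
  circ_add : ∀ a b c : B, a * (b + c) = a * b - a + a * c

namespace SkewBrace

variable {B : Type*} [SkewBrace B]

/-- `lam a b = -a + a ∘ b`, i.e. `λ_a(b)`. -/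
def lam (a b : B) : B := -a + a * b

/-- `a * b` (the star operation) `= λ_a(b) - b = -a + a ∘ b - b`. -/
def starOp (a b : B) : B := -a + a * b - b

/-- `X * Y` : the additive subgroup generated by all `x * y`, `x ∈ X`, `y ∈ Y`,
regarded as a set. -/
def starSpan (X Y : Set B) : Set B :=
  (AddSubgroup.closure {z : B | ∃ x ∈ X, ∃ y ∈ Y, z = starOp x y} : AddSubgroup B)

/-- `[X,Y]₊` : the additive subgroup generated by all additive commutators
`x + y - x - y`, `x ∈ X`, `y ∈ Y`, regarded as a set. -/
def addCommSpan (X Y : Set B) : Set B :=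
  (AddSubgroup.closure {z : B | ∃ x ∈ X, ∃ y ∈ Y, z = x + y - x - y} : AddSubgroup B)

/-- A sub skew brace: a subset containing `0` and closed under both group
operations and both inverses. -/
def IsSubSkewBrace (S : Set B) : Prop :=
  0 ∈ S ∧ (∀ a ∈ S, ∀ b ∈ S, a + b ∈ S) ∧ (∀ a ∈ S, -a ∈ S) ∧
    (∀ a ∈ S, ∀ b ∈ S, a * b ∈ S) ∧ (∀ a ∈ S, a⁻¹ ∈ S)

/-- An ideal: a sub skew brace that is normal in `(B,+)` and in `(B,∘)` and
invariant under all `λ_a`. -/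
def IsIdeal (S : Set B) : Prop :=
  IsSubSkewBrace S ∧ (∀ a : B, ∀ i ∈ S, a + i - a ∈ S) ∧
    (∀ a : B, ∀ i ∈ S, a * i * a⁻¹ ∈ S) ∧ (∀ a : B, ∀ i ∈ S, lam a i ∈ S)

/-- The annihilator `Ann(B) = {x | x∘a = a∘x = x+a = a+x for all a}`. -/
def annSet (B : Type*) [SkewBrace B] : Set B :=
  {x | ∀ a : B, x * a = a * x ∧ x * a = x + a ∧ x + a = a + x}

/-- The annihilator series: `Ann₀(B) = 0` and `Ann_{n+1}(B)` is the preimage of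
`Ann(B/Annₙ(B))` under the quotient map; membership is expressed via coset
equalities modulo `Annₙ(B)`. -/
def annSeries (B : Type*) [SkewBrace B] : ℕ → Set B
  | 0 => {0}
  | n + 1 => {x | ∀ a : B,
      x * a - a * x ∈ annSeries B n ∧
      x * a - (x + a) ∈ annSeries B n ∧
      (x + a) - (a + x) ∈ annSeries B n}

/-- `B` is annihilator nilpotent if `Annₙ(B) = B` for some `n`. -/
def AnnNilpotent (B : Type*) [SkewBrace B] : Prop :=
  ∃ n : ℕ, annSeries B n = Set.univ

/-- `leftPow B n` is `B^{n+1}`: `B¹ = B`, `B^{n+1} = B * Bⁿ`. -/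
def leftPow (B : Type*) [SkewBrace B] : ℕ → Set B
  | 0 => Set.univ
  | n + 1 => starSpan Set.univ (leftPow B n)

/-- `rightPow B n` is `B⁽ⁿ⁺¹⁾`: `B⁽¹⁾ = B`, `B⁽ⁿ⁺¹⁾ = B⁽ⁿ⁾ * B`. -/
def rightPow (B : Type*) [SkewBrace B] : ℕ → Set B
  | 0 => Set.univ
  | n + 1 => starSpan (rightPow B n) Set.univ

/-- `B` is left nilpotent if `Bⁿ = 0` for some `n ≥ 1`. -/
def LeftNilpotent (B : Type*) [SkewBrace B] : Prop :=
  ∃ n : ℕ, leftPow B n = ({0} : Set B)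

/-- `B` is right nilpotent if `B⁽ⁿ⁾ = 0` for some `n ≥ 1`. -/
def RightNilpotent (B : Type*) [SkewBrace B] : Prop :=
  ∃ n : ℕ, rightPow B n = ({0} : Set B)

/-- `strongPow B n` is `B^[n+1]`: `B^[1] = B`, and `B^[n+1]` is the additive
subgroup generated by `⋃_{i=1}^{n} B^[i] * B^[n+1-i]`. -/
def strongPow (B : Type*) [SkewBrace B] : ℕ → Set B
  | 0 => Set.univ
  | n + 1 => (AddSubgroup.closure (⋃ j : Fin (n + 1),
      {z : B | ∃ x ∈ strongPow B j.1, ∃ y ∈ strongPow B (n - j.1), z = starOp x y}) :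
        AddSubgroup B)
  decreasing_by
  · exact j.isLt
  · omega

/-- `B` is strongly nilpotent if `B^[n] = 0` for some `n ≥ 1`. -/
def StronglyNilpotent (B : Type*) [SkewBrace B] : Prop :=
  ∃ n : ℕ, strongPow B n = ({0} : Set B)

/-- `gammaAux B n` is `Γ_[n+1](B)`: `Γ_[1](B) = B` and, for `n ≥ 2`, `Γ_[n](B)` is
the additive subgroup generated by the sets `Γ_[i](B) * Γ_[n-i](B)` and
`[Γ_[i](B), Γ_[n-i](B)]₊` for `1 ≤ i ≤ n-1`. -/
def gammaAux (B : Type*) [SkewBrace B] : ℕ → Set B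
  | 0 => Set.univ
  | n + 1 => (AddSubgroup.closure (⋃ j : Fin (n + 1),
      {z : B | ∃ x ∈ gammaAux B j.1, ∃ y ∈ gammaAux B (n - j.1),
        z = starOp x y ∨ z = x + y - x - y}) : AddSubgroup B)
  decreasing_by
  · exact j.isLt
  · omega

/-- `Γ_[n](B)` for `n ≥ 1` (one-based indexing as in the paper). -/
def gammaBr (B : Type*) [SkewBrace B] (n : ℕ) : Set B := gammaAux B (n - 1)

/-- `B` is finitely generated as a skew brace: there is a finite subset whose
smallest containing sub skew brace is `B` itself. -/
def SBFinitelyGenerated (B : Type*) [SkewBrace B] : Prop :=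
  ∃ S : Set B, S.Finite ∧ ∀ T : Set B, IsSubSkewBrace T → S ⊆ T → T = Set.univ

/-- `B` satisfies the ascending chain condition on sub skew braces. -/
def ACCSubSkewBrace (B : Type*) [SkewBrace B] : Prop :=
  ∀ f : ℕ → Set B, (∀ n, IsSubSkewBrace (f n)) → (∀ n, f n ⊆ f (n + 1)) →
    ∃ N : ℕ, ∀ n, N ≤ n → f n = f N

/-!
Annihilator nilpotency makes the series `Γ_[n]` reach `0`: if `Γ_[r]` lies in the preimage of
`Ann(B ⧸ M)`, then each star product and additive commutator generating `Γ_[2r]` has a factor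
there, so it lies in `M`; hence `Ann_N(B) = B` gives `Γ_[2^N] = 0`.

If a finite `S` generates `B` as a skew brace, then `S` generates `Γ_[1]` modulo `Γ_[2]`, and
inductively the star products and additive commutators of generators of the layers `Γ_[i]` and
`Γ_[j]` generate `Γ_[i+j]` modulo `Γ_[i+j+1]`: modulo that subgroup both operations are additive
in each argument (in the left argument of the star product with respect to `∘`, which agrees
with `+` on `Γ_[i]` modulo `Γ_[i+1]`). So the generators of the finitely many nonzero layers
generate both `(B,+)` and `(B,∘)`.
-/

theorem one_eq_zero : (1 : B) = 0 := by
  simpa using circ_add (1 : B) 0 0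

@[simp]
theorem mul_zero_eq_self (a : B) : a * 0 = a := by
  rw [← one_eq_zero, mul_one]

@[simp]
theorem zero_mul_eq_self (a : B) : 0 * a = a := by
  rw [← one_eq_zero, one_mul]

theorem mul_eq_add_lam (a b : B) : a * b = a + lam a b := by
  simp [lam]

theorem lam_eq_starOp_add (a b : B) : lam a b = starOp a b + b := by
  simp [lam, starOp]

theorem mul_eq_add_starOp_add (a b : B) : a * b = a + starOp a b + b := by
  rw [mul_eq_add_lam, lam_eq_starOp_add, add_assoc]

theorem mul_add_eq (a b c : B) : a * (b + c) = a * b + lam a c := by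
  rw [circ_add, lam, sub_eq_add_neg, add_assoc]

theorem lam_add (a b c : B) : lam a (b + c) = lam a b + lam a c := by
  rw [lam, mul_add_eq, ← add_assoc, ← lam]

theorem lam_mul (a b c : B) : lam (a * b) c = lam a (lam b c) := by
  have h := mul_add_eq a b (lam b c)
  rw [← mul_eq_add_lam, ← mul_assoc] at h
  rw [lam, h, lam, neg_add_cancel_left]

@[simp]
theorem lam_one (b : B) : lam 1 b = b := by
  simp [lam, one_eq_zero]

theorem mul_lam_inv (a b : B) : a * lam a⁻¹ b = a + b := by
  rw [mul_eq_add_lam, ← lam_mul, mul_inv_cancel, lam_one]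

@[simp]
theorem starOp_zero_left (a : B) : starOp 0 a = 0 := by
  simp [starOp]

theorem starOp_mul_left (a b c : B) :
    starOp (a * b) c = starOp a (starOp b c) + starOp b c + starOp a c := by
  have h : starOp (a * b) c = lam a (lam b c) - c := by
    rw [← lam_mul, lam_eq_starOp_add, add_sub_cancel_right]
  rw [h, lam_eq_starOp_add b, lam_add, lam_eq_starOp_add, lam_eq_starOp_add]
  simp [sub_eq_add_neg, add_assoc]

theorem starOp_add_right (a y z : B) :
    starOp a (y + z) = starOp a y + (y + starOp a z - y) := by
  simp only [starOp, circ_add a y z, sub_eq_add_neg, neg_add_rev, add_assoc, neg_add_cancel_left]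

theorem neg_eq_inv_add_starOp (a : B) : -a = a⁻¹ + starOp a⁻¹ a := by
  simp [starOp, one_eq_zero, sub_eq_add_neg]

theorem inv_eq_neg_sub_starOp (a : B) : a⁻¹ = -a - starOp a⁻¹ a := by
  rw [neg_eq_inv_add_starOp, add_sub_cancel_right]

-- An ideal of `B` in its usual additive description (cf. `IsIdeal`).
structure IsAddIdeal (M : AddSubgroup B) : Prop where
  normal : M.Normal
  lam_mem : ∀ a, ∀ m ∈ M, lam a m ∈ M
  starOp_mem : ∀ m ∈ M, ∀ a, starOp m a ∈ M

theorem isAddIdeal_bot : IsAddIdeal (⊥ : AddSubgroup B) where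
  normal := inferInstance
  lam_mem a m hm := by simp_all [lam]
  starOp_mem m hm a := by simp_all

-- The preimage of `Ann(B ⧸ M)` in `B`.
def relAnn (M : Set B) : Set B :=
  {x | ∀ a : B, x * a - a * x ∈ M ∧ x * a - (x + a) ∈ M ∧ (x + a) - (a + x) ∈ M}

theorem annSeries_succ (n : ℕ) : annSeries B (n + 1) = relAnn (annSeries B n) := rfl

section Quotient

variable {M : AddSubgroup B} [M.Normal]

theorem mem_relAnn_iff {x : B} : x ∈ relAnn (M : Set B) ↔ ∀ a : B,
    ((x * a : B) : B ⧸ M) = x + a ∧ ((a * x : B) : B ⧸ M) = a + x ∧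
      AddCommute (x : B ⧸ M) a := by
  simp only [relAnn, Set.mem_ofPred_eq, SetLike.mem_coe, ← QuotientAddGroup.eq_iff_sub_mem,
    QuotientAddGroup.mk_add, AddCommute, AddSemiconjBy]
  refine forall_congr' fun a => ⟨fun ⟨h, hl, hc⟩ => ⟨hl, ?_, hc⟩, fun ⟨hl, hr, hc⟩ => ⟨?_, hl, hc⟩⟩
  · rw [← h, hl, hc]
  · rw [hl, hr, hc]

theorem IsAddIdeal.mk_mul_congr (hM : IsAddIdeal M) {u u' v v' : B}
    (hu : (u : B ⧸ M) = u') (hv : (v : B ⧸ M) = v') :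
    ((u * v : B) : B ⧸ M) = (u' * v' : B) := by
  have mk_mul_add (u v μ : B) (hμ : μ ∈ M) : ((u * (v + μ) : B) : B ⧸ M) = (u * v : B) := by
    rw [mul_add_eq, QuotientAddGroup.mk_add,
      (QuotientAddGroup.eq_zero_iff _).2 (hM.lam_mem u μ hμ), add_zero]
  have mk_add_mul (u v μ : B) (hμ : μ ∈ M) : (((u + μ) * v : B) : B ⧸ M) = (u * v : B) := by
    have hν := hM.lam_mem u⁻¹ μ hμ
    have hm := M.add_mem hν (hM.starOp_mem _ hν v)
    rw [← mul_lam_inv, mul_assoc, mul_eq_add_starOp_add (lam u⁻¹ μ) v, mul_add_eq,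
      mul_eq_add_lam u, QuotientAddGroup.mk_add, QuotientAddGroup.mk_add,
      (QuotientAddGroup.eq_zero_iff _).2 (hM.lam_mem u _ hm), add_zero,
      ← QuotientAddGroup.mk_add, ← mul_eq_add_lam]
  obtain ⟨μ, hμ, rfl⟩ : ∃ μ ∈ M, u' = u + μ := ⟨-u + u', QuotientAddGroup.eq.1 hu, by simp⟩
  obtain ⟨ν, hν, rfl⟩ : ∃ ν ∈ M, v' = v + ν := ⟨-v + v', QuotientAddGroup.eq.1 hv, by simp⟩
  rw [mk_add_mul _ _ _ hμ, mk_mul_add _ _ _ hν]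

theorem mk_mul_of_mem_relAnn {x : B} (hx : x ∈ relAnn (M : Set B)) (a : B) :
    ((x * a : B) : B ⧸ M) = x + a :=
  ((mem_relAnn_iff.1 hx) a).1

theorem mul_mem_relAnn {x y : B} (hx : x ∈ relAnn (M : Set B))
    (hy : y ∈ relAnn (M : Set B)) : x * y ∈ relAnn (M : Set B) := by
  rw [mem_relAnn_iff] at hx hy ⊢
  have hxy : ((x * y : B) : B ⧸ M) = x + y := (hx y).1
  intro a
  refine ⟨?_, ?_, ?_⟩
  · rw [mul_assoc, (hx _).1, (hy a).1, hxy, add_assoc]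
  · rw [← mul_assoc, (hy _).2.1, (hx a).2.1, hxy, add_assoc]
  · exact hxy ▸ (hx a).2.2.add_left (hy a).2.2

theorem mk_inv_mul_of_mem_relAnn {x : B} (hx : x ∈ relAnn (M : Set B)) (a : B) :
    ((x⁻¹ * a : B) : B ⧸ M) = -x + a := by
  rw [eq_neg_add_iff_add_eq, ← mk_mul_of_mem_relAnn hx, mul_inv_cancel_left]

theorem mk_inv_of_mem_relAnn {x : B} (hx : x ∈ relAnn (M : Set B)) :
    ((x⁻¹ : B) : B ⧸ M) = -x := by
  simpa using mk_inv_mul_of_mem_relAnn hx 0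

theorem inv_mem_relAnn {x : B} (hx : x ∈ relAnn (M : Set B)) : x⁻¹ ∈ relAnn (M : Set B) := by
  have hl := mk_inv_mul_of_mem_relAnn hx
  have hinv := mk_inv_of_mem_relAnn hx
  rw [mem_relAnn_iff] at hx ⊢
  intro a
  refine ⟨by rw [hl, hinv], ?_, hinv ▸ (hx a).2.2.neg_left⟩
  rw [hinv, eq_add_neg_iff_add_eq, ← (hx _).2.1, inv_mul_cancel_right]

theorem IsAddIdeal.mem_relAnn_of_mk_eq (hM : IsAddIdeal M) {x x' : B}
    (hx : x ∈ relAnn (M : Set B)) (h : (x' : B ⧸ M) = x) : x' ∈ relAnn (M : Set B) := by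
  rw [mem_relAnn_iff] at hx ⊢
  intro a
  rw [hM.mk_mul_congr h rfl, hM.mk_mul_congr rfl h, h]
  exact hx a

theorem IsAddIdeal.subset_relAnn (hM : IsAddIdeal M) : (M : Set B) ⊆ relAnn (M : Set B) := by
  intro m hm
  refine hM.mem_relAnn_of_mk_eq (x := 0) ?_ ((QuotientAddGroup.eq_zero_iff m).2 hm)
  simp [mem_relAnn_iff]

theorem starOp_addComm_mem_of_mem_relAnn {x : B} (hx : x ∈ relAnn (M : Set B)) (a : B) :
    (starOp x a ∈ M ∧ x + a - x - a ∈ M) ∧ (starOp a x ∈ M ∧ a + x - a - x ∈ M) := by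
  obtain ⟨hl, hr, hc⟩ := mem_relAnn_iff.1 hx a
  simp only [← QuotientAddGroup.eq_zero_iff, starOp, QuotientAddGroup.mk_sub,
    QuotientAddGroup.mk_add, QuotientAddGroup.mk_neg, hl, hr]
  exact ⟨⟨by simp, by rw [hc.eq]; simp⟩, ⟨by simp, by rw [← hc.eq]; simp⟩⟩

def IsAddIdeal.relAnnSubgroup (hM : IsAddIdeal M) : AddSubgroup B where
  carrier := relAnn (M : Set B)
  zero_mem' := hM.subset_relAnn M.zero_mem
  add_mem' {x y} hx hy := hM.mem_relAnn_of_mk_eq (mul_mem_relAnn hx hy)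
    (by rw [mk_mul_of_mem_relAnn hx, QuotientAddGroup.mk_add])
  neg_mem' {x} hx := hM.mem_relAnn_of_mk_eq (inv_mem_relAnn hx)
    (by rw [QuotientAddGroup.mk_neg, mk_inv_of_mem_relAnn hx])

theorem IsAddIdeal.isAddIdeal_relAnnSubgroup (hM : IsAddIdeal M) :
    IsAddIdeal hM.relAnnSubgroup where
  normal := ⟨fun x hx a => hM.mem_relAnn_of_mk_eq hx (by
    rw [QuotientAddGroup.mk_add, QuotientAddGroup.mk_add, ← ((mem_relAnn_iff.1 hx) a).2.2.eq,
      QuotientAddGroup.mk_neg, add_neg_cancel_right])⟩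
  lam_mem a x hx := hM.mem_relAnn_of_mk_eq hx (by
    rw [lam, QuotientAddGroup.mk_add, ((mem_relAnn_iff.1 hx) a).2.1, QuotientAddGroup.mk_neg,
      neg_add_cancel_left])
  starOp_mem x hx a := hM.subset_relAnn (starOp_addComm_mem_of_mem_relAnn hx a).1.1

end Quotient

theorem exists_isAddIdeal_annSeries (n : ℕ) :
    ∃ M : AddSubgroup B, IsAddIdeal M ∧ (M : Set B) = annSeries B n := by
  induction n with
  | zero => exact ⟨⊥, isAddIdeal_bot, AddSubgroup.coe_bot⟩
  | succ n ih =>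
    obtain ⟨M, hM, hMn⟩ := ih
    have := hM.normal
    exact ⟨hM.relAnnSubgroup, hM.isAddIdeal_relAnnSubgroup, by rw [annSeries_succ, ← hMn]; rfl⟩

def starCommSet (X Y : Set B) : Set B :=
  {z | ∃ x ∈ X, ∃ y ∈ Y, z = starOp x y ∨ z = x + y - x - y}

-- `gamma B n` is `Γ_[n+1](B)`, as in `gammaAux`.
def gamma (B : Type*) [SkewBrace B] (n : ℕ) : AddSubgroup B :=
  AddSubgroup.closure (gammaAux B n)

theorem gamma_zero : gamma B 0 = ⊤ := by
  rw [gamma, gammaAux, AddSubgroup.closure_univ]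

theorem coe_gamma (n : ℕ) : (gamma B n : Set B) = gammaAux B n := by
  cases n with
  | zero => rw [gamma_zero, gammaAux, AddSubgroup.coe_top]
  | succ n => rw [gamma, gammaAux, AddSubgroup.closure_eq]

theorem gamma_succ (n : ℕ) :
    gamma B (n + 1) = AddSubgroup.closure
      (⋃ i : Fin (n + 1), starCommSet (gamma B i) (gamma B (n - i))) := by
  rw [gamma, gammaAux, AddSubgroup.closure_eq]
  simp only [starCommSet, coe_gamma]

@[simp]
theorem mem_gamma_zero (x : B) : x ∈ gamma B 0 := by
  simp [gamma_zero]

theorem gamma_succ_le_iff {n : ℕ} {H : AddSubgroup B} :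
    gamma B (n + 1) ≤ H ↔ ∀ i ≤ n, ∀ x ∈ gamma B i, ∀ y ∈ gamma B (n - i),
      starOp x y ∈ H ∧ x + y - x - y ∈ H := by
  rw [gamma_succ, AddSubgroup.closure_le, Set.iUnion_subset_iff]
  constructor
  · intro h i hi x hx y hy
    exact ⟨h ⟨i, by omega⟩ ⟨x, hx, y, hy, Or.inl rfl⟩, h ⟨i, by omega⟩ ⟨x, hx, y, hy, Or.inr rfl⟩⟩
  · rintro h i z ⟨x, hx, y, hy, rfl | rfl⟩
    exacts [(h i (by omega) x hx y hy).1, (h i (by omega) x hx y hy).2]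

theorem starOp_addComm_mem_gamma_of_eq {i j k : ℕ} {x y : B} (hx : x ∈ gamma B i)
    (hy : y ∈ gamma B j) (hk : i + j + 1 = k) :
    starOp x y ∈ gamma B k ∧ x + y - x - y ∈ gamma B k := by
  subst hk
  exact gamma_succ_le_iff.1 le_rfl i (by omega) x hx y (by rwa [Nat.add_sub_cancel_left])

theorem gamma_succ_le (n : ℕ) : gamma B (n + 1) ≤ gamma B n := by
  induction n using Nat.strong_induction_on with
  | _ n ih =>
    cases n with
    | zero => exact gamma_zero (B := B) ▸ le_top
    | succ m =>
      rw [gamma_succ_le_iff]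
      rintro (_ | s) hs x hx y hy
      · exact starOp_addComm_mem_gamma_of_eq hx (ih m (by omega) hy) (by omega)
      · exact starOp_addComm_mem_gamma_of_eq (ih s (by omega) hx) hy (by omega)

theorem gamma_antitone : Antitone (gamma B) :=
  antitone_nat_of_succ_le gamma_succ_le

theorem starOp_mem_gamma {i j k : ℕ} {x y : B} (hx : x ∈ gamma B i) (hy : y ∈ gamma B j)
    (hk : k ≤ i + j + 1) : starOp x y ∈ gamma B k :=
  gamma_antitone hk (starOp_addComm_mem_gamma_of_eq hx hy rfl).1

theorem addComm_mem_gamma {i j k : ℕ} {x y : B} (hx : x ∈ gamma B i) (hy : y ∈ gamma B j)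
    (hk : k ≤ i + j + 1) : x + y - x - y ∈ gamma B k :=
  gamma_antitone hk (starOp_addComm_mem_gamma_of_eq hx hy rfl).2

instance gamma_normal (n : ℕ) : (gamma B n).Normal where
  conj_mem z hz a := by
    have h := (gamma B n).add_mem (addComm_mem_gamma (mem_gamma_zero a) hz (by omega)) hz
    rwa [sub_add_cancel, sub_eq_add_neg] at h

theorem lam_mem_gamma {n : ℕ} (a : B) {y : B} (hy : y ∈ gamma B n) : lam a y ∈ gamma B n := by
  rw [lam_eq_starOp_add]
  exact (gamma B n).add_mem (starOp_mem_gamma (mem_gamma_zero a) hy (by omega)) hy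

theorem mul_mem_gamma {n : ℕ} {u v : B} (hu : u ∈ gamma B n) (hv : v ∈ gamma B n) :
    u * v ∈ gamma B n := by
  rw [mul_eq_add_lam]
  exact (gamma B n).add_mem hu (lam_mem_gamma u hv)

theorem inv_mem_gamma {n : ℕ} {u : B} (hu : u ∈ gamma B n) : u⁻¹ ∈ gamma B n := by
  rw [inv_eq_neg_sub_starOp]
  exact (gamma B n).sub_mem ((gamma B n).neg_mem hu)
    (starOp_mem_gamma (mem_gamma_zero _) hu (by omega))

theorem subgroupClosure_subset_gamma {n : ℕ} {X : Set B} (hX : X ⊆ gamma B n) :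
    (Subgroup.closure X : Set B) ⊆ gamma B n := by
  intro x hx
  induction hx using Subgroup.closure_induction with
  | mem x hx => exact hX hx
  | one => rw [one_eq_zero]; exact (gamma B n).zero_mem
  | mul x y _ _ hx hy => exact mul_mem_gamma hx hy
  | inv x _ hx => exact inv_mem_gamma hx

theorem gamma_two_mul_add_one_le {M : AddSubgroup B} [M.Normal] {r : ℕ}
    (h : (gamma B r : Set B) ⊆ relAnn (M : Set B)) : gamma B (2 * r + 1) ≤ M := by
  rw [gamma_succ_le_iff]
  intro i hi x hx y hy
  rcases le_or_gt r i with hri | hir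
  · exact (starOp_addComm_mem_of_mem_relAnn (h (gamma_antitone hri hx)) y).1
  · exact (starOp_addComm_mem_of_mem_relAnn (h (gamma_antitone (by omega) hy)) x).2

theorem gamma_subset_annSeries {r j k : ℕ} (h : (gamma B r : Set B) ⊆ annSeries B (j + k)) :
    (gamma B (2 ^ k * (r + 1) - 1) : Set B) ⊆ annSeries B j := by
  induction k generalizing j with
  | zero => simpa using h
  | succ k ih =>
    obtain ⟨M, hM, hMj⟩ := exists_isAddIdeal_annSeries (B := B) j
    have := hM.normal
    have h' := ih (j := j + 1) (by rwa [add_right_comm, add_assoc])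
    rw [annSeries_succ, ← hMj] at h'
    have hpos : 0 < 2 ^ k * (r + 1) := by positivity
    have hidx : 2 * (2 ^ k * (r + 1) - 1) + 1 = 2 ^ (k + 1) * (r + 1) - 1 := by
      rw [pow_succ', mul_assoc]; omega
    rw [← hMj, ← hidx]
    exact gamma_two_mul_add_one_le h'

theorem exists_gamma_eq_bot (h : AnnNilpotent B) : ∃ m, gamma B m = ⊥ := by
  obtain ⟨N, hN⟩ := h
  have h := gamma_subset_annSeries (B := B) (r := 0) (j := 0) (k := N) (by simp [hN])
  rw [zero_add, mul_one] at h
  exact ⟨2 ^ N - 1, eq_bot_iff.2 fun x hx => by simpa [annSeries] using h hx⟩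

-- On `gamma B k`, `u + v` and `u * v` differ by a factor from `gamma B (k + 1)`.
theorem addClosure_subset_closure_of_subset_gamma {k : ℕ} {T : Set B} (hT : T ⊆ gamma B k) :
    (AddSubgroup.closure (T ∪ gamma B (k + 1)) : Set B) ⊆
      Subgroup.closure (T ∪ gamma B (k + 1)) := by
  have hX : T ∪ gamma B (k + 1) ⊆ gamma B k := Set.union_subset hT (gamma_succ_le k)
  have hΓ : (gamma B (k + 1) : Set B) ⊆ Subgroup.closure (T ∪ gamma B (k + 1)) :=
    fun g hg => Subgroup.subset_closure (Or.inr hg)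
  intro x hx
  induction hx using AddSubgroup.closure_induction with
  | mem x hx => exact Subgroup.subset_closure hx
  | zero => rw [← one_eq_zero]; exact one_mem _
  | add u v _ hv hu' hv' =>
    have hvk : v ∈ gamma B k := (AddSubgroup.closure_le _).2 hX hv
    set s := starOp u⁻¹ v
    have hc : -v + s + v ∈ gamma B (k + 1) := by
      simpa using (gamma_normal (k + 1)).conj_mem _
        (starOp_mem_gamma (mem_gamma_zero u⁻¹) hvk (by omega)) (-v)
    have e : v * lam v⁻¹ (-v + s + v) = lam u⁻¹ v := by
      rw [mul_lam_inv, lam_eq_starOp_add, ← add_assoc, ← add_assoc, add_neg_cancel, zero_add]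
    rw [← mul_lam_inv u v, ← e]
    exact mul_mem hu' (mul_mem hv' (hΓ (lam_mem_gamma _ hc)))
  | neg u hu hu' =>
    have huk : u ∈ gamma B k := (AddSubgroup.closure_le _).2 hX hu
    have e := mul_lam_inv u⁻¹ (starOp u⁻¹ u)
    rw [inv_inv] at e
    rw [neg_eq_inv_add_starOp, ← e]
    exact mul_mem (inv_mem hu')
      (hΓ (lam_mem_gamma _ (starOp_mem_gamma (mem_gamma_zero _) huk (by omega))))

theorem add_sub_mem_of_mem_gamma {D : AddSubgroup B} {n : ℕ} (hD : gamma B (n + 1) ≤ D)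
    {s : B} (hs : s ∈ gamma B n) (hsD : s ∈ D) (v : B) : v + s - v ∈ D := by
  have h := D.add_mem (hD (addComm_mem_gamma (mem_gamma_zero v) hs (by omega))) hsD
  rwa [sub_add_cancel] at h

theorem map_mem_of_mem_addClosure {φ : B → B} {D : AddSubgroup B} {n : ℕ} {X : Set B}
    (hφ : ∀ v w, φ (v + w) = φ v + (v + φ w - v)) (hD : gamma B (n + 1) ≤ D)
    (hΓ : ∀ v ∈ AddSubgroup.closure X, φ v ∈ gamma B n) (hX : ∀ x ∈ X, φ x ∈ D)
    {y : B} (hy : y ∈ AddSubgroup.closure X) : φ y ∈ D := by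
  have hφ0 : φ 0 = 0 := by simpa using hφ 0 0
  induction hy using AddSubgroup.closure_induction with
  | mem x hx => exact hX x hx
  | zero => rw [hφ0]; exact D.zero_mem
  | add v w _ hw hv' hw' =>
    rw [hφ]
    exact D.add_mem hv' (add_sub_mem_of_mem_gamma hD (hΓ w hw) hw' v)
  | neg v hv hv' =>
    have h := hφ v (-v)
    rw [add_neg_cancel, hφ0, eq_comm, add_eq_zero_iff_neg_eq] at h
    have e : φ (-v) = -v + -φ v - -v := by
      rw [h]; simp [sub_eq_add_neg, add_assoc]
    rw [e]
    exact add_sub_mem_of_mem_gamma hD ((gamma B n).neg_mem (hΓ v hv)) (D.neg_mem hv') (-v)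

theorem starOp_mem_of_mem_closure {D : AddSubgroup B} {i j : ℕ} {X : Set B}
    (hX : X ⊆ gamma B i) (hD : gamma B (i + j + 2) ≤ D) {t : B} (ht : t ∈ gamma B j)
    (hXt : ∀ s ∈ X, starOp s t ∈ D) {x : B} (hx : x ∈ Subgroup.closure X) : starOp x t ∈ D := by
  have hcl := subgroupClosure_subset_gamma hX
  induction hx using Subgroup.closure_induction with
  | mem s hs => exact hXt s hs
  | one => rw [one_eq_zero, starOp_zero_left]; exact D.zero_mem
  | mul a b ha hb iha ihb =>
    rw [starOp_mul_left]
    refine D.add_mem (D.add_mem (hD ?_) ihb) iha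
    exact starOp_mem_gamma (hcl ha) (starOp_mem_gamma (hcl hb) ht le_rfl) (by omega)
  | inv a ha iha =>
    have h := starOp_mul_left a a⁻¹ t
    rw [mul_inv_cancel, one_eq_zero, starOp_zero_left, eq_comm, add_eq_zero_iff_eq_neg] at h
    rw [eq_neg_add_of_add_eq h]
    refine D.add_mem (D.neg_mem (hD ?_)) (D.neg_mem iha)
    exact starOp_mem_gamma (hcl ha) (starOp_mem_gamma (hcl (inv_mem ha)) ht le_rfl) (by omega)

theorem addComm_add_right (a y z : B) :
    a + (y + z) - a - (y + z) = (a + y - a - y) + (y + (a + z - a - z) - y) := by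
  simp [sub_eq_add_neg, add_assoc]

theorem neg_addComm (a b : B) : -(a + b - a - b) = b + a - b - a := by
  simp [sub_eq_add_neg, add_assoc]

theorem starOp_addComm_mem_closure_starCommSet {i j : ℕ} {Ti Tj : Set B}
    (hTi : Ti ⊆ gamma B i) (hTj : Tj ⊆ gamma B j)
    (hi : gamma B i ≤ AddSubgroup.closure (Ti ∪ gamma B (i + 1)))
    (hj : gamma B j ≤ AddSubgroup.closure (Tj ∪ gamma B (j + 1)))
    {x y : B} (hx : x ∈ gamma B i) (hy : y ∈ gamma B j) :
    starOp x y ∈ AddSubgroup.closure (starCommSet Ti Tj ∪ gamma B (i + j + 2)) ∧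
      x + y - x - y ∈ AddSubgroup.closure (starCommSet Ti Tj ∪ gamma B (i + j + 2)) := by
  set D := AddSubgroup.closure (starCommSet Ti Tj ∪ gamma B (i + j + 2))
  have hD : gamma B (i + j + 2) ≤ D := fun z hz => AddSubgroup.subset_closure (Or.inr hz)
  have hgen {u v : B} (hu : u ∈ Ti) (hv : v ∈ Tj) : starOp u v ∈ D ∧ u + v - u - v ∈ D :=
    ⟨AddSubgroup.subset_closure (Or.inl ⟨u, hu, v, hv, Or.inl rfl⟩),
      AddSubgroup.subset_closure (Or.inl ⟨u, hu, v, hv, Or.inr rfl⟩)⟩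
  have hXi : Ti ∪ gamma B (i + 1) ⊆ gamma B i := Set.union_subset hTi (gamma_succ_le i)
  have hXj : Tj ∪ gamma B (j + 1) ⊆ gamma B j := Set.union_subset hTj (gamma_succ_le j)
  have of_generators (φ : B → B) (hφ : ∀ v w, φ (v + w) = φ v + (v + φ w - v))
      (hΓ : ∀ l, ∀ v ∈ gamma B l, φ v ∈ gamma B (i + l + 1)) (hT : ∀ t ∈ Tj, φ t ∈ D) :
      φ y ∈ D := by
    refine map_mem_of_mem_addClosure hφ hD
      (fun v hv => hΓ j v ((AddSubgroup.closure_le _).2 hXj hv)) ?_ (hj hy)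
    rintro v (hv | hv)
    exacts [hT v hv, hD (gamma_antitone (by omega) (hΓ _ v hv))]
  constructor
  · refine of_generators _ (starOp_add_right x) (fun l v hv => starOp_mem_gamma hx hv le_rfl) ?_
    intro t ht
    refine starOp_mem_of_mem_closure hXi hD (hTj ht) ?_
      (addClosure_subset_closure_of_subset_gamma hTi (hi hx))
    rintro s (hs | hs)
    exacts [(hgen hs ht).1, hD (starOp_mem_gamma hs (hTj ht) (by omega))]
  · refine of_generators (fun v => x + v - x - v) (addComm_add_right x)
      (fun l v hv => addComm_mem_gamma hx hv le_rfl) ?_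
    intro t ht
    rw [← neg_addComm]
    refine D.neg_mem (map_mem_of_mem_addClosure (addComm_add_right t) hD
      (fun v hv => addComm_mem_gamma (hTj ht) ((AddSubgroup.closure_le _).2 hXi hv) (by omega))
      ?_ (hi hx))
    rintro s (hs | hs)
    · rw [← neg_addComm]
      exact D.neg_mem (hgen hs ht).2
    · exact hD (addComm_mem_gamma (hTj ht) hs (by omega))

theorem starCommSet_finite {X Y : Set B} (hX : X.Finite) (hY : Y.Finite) :
    (starCommSet X Y).Finite := by
  refine ((hX.image2 starOp hY).union (hX.image2 (fun x y => x + y - x - y) hY)).subset ?_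
  rintro z ⟨x, hx, y, hy, rfl | rfl⟩
  exacts [Or.inl ⟨x, hx, y, hy, rfl⟩, Or.inr ⟨x, hx, y, hy, rfl⟩]

-- Generators of `gamma B n` modulo `gamma B (n + 1)`, see `gamma_le_closure_layerGens`.
def layerGens (S : Set B) : ℕ → Set B
  | 0 => S
  | n + 1 => ⋃ i : Fin (n + 1), starCommSet (layerGens S i) (layerGens S (n - i))
  decreasing_by
  · exact i.isLt
  · omega

theorem layerGens_succ (S : Set B) (n : ℕ) :
    layerGens S (n + 1) =
      ⋃ i : Fin (n + 1), starCommSet (layerGens S i) (layerGens S (n - i)) := by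
  rw [layerGens]

theorem layerGens_finite {S : Set B} (hS : S.Finite) (n : ℕ) : (layerGens S n).Finite := by
  induction n using Nat.strong_induction_on with
  | _ n ih =>
    cases n with
    | zero => rwa [layerGens]
    | succ n =>
      rw [layerGens_succ]
      exact Set.finite_iUnion fun i => starCommSet_finite (ih i (by omega)) (ih _ (by omega))

theorem layerGens_subset_gamma (S : Set B) (n : ℕ) : layerGens S n ⊆ gamma B n := by
  induction n using Nat.strong_induction_on with
  | _ n ih =>
    cases n with
    | zero => exact fun x _ => mem_gamma_zero x
    | succ n =>
      rw [layerGens_succ, Set.iUnion_subset_iff]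
      rintro i z ⟨x, hx, y, hy, rfl | rfl⟩
      · exact starOp_mem_gamma (ih i (by omega) hx) (ih _ (by omega) hy) (by omega)
      · exact addComm_mem_gamma (ih i (by omega) hx) (ih _ (by omega) hy) (by omega)

theorem isSubSkewBrace_of_gamma_one_le {K : AddSubgroup B} (hK : gamma B 1 ≤ K) :
    IsSubSkewBrace (K : Set B) := by
  refine ⟨K.zero_mem, fun a ha b hb => K.add_mem ha hb, fun a ha => K.neg_mem ha, ?_, ?_⟩
  · intro a ha b hb
    rw [mul_eq_add_starOp_add]
    exact K.add_mem (K.add_mem ha (hK (starOp_mem_gamma (mem_gamma_zero a)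
      (mem_gamma_zero b) le_rfl))) hb
  · intro a ha
    rw [inv_eq_neg_sub_starOp]
    exact K.sub_mem (K.neg_mem ha)
      (hK (starOp_mem_gamma (mem_gamma_zero _) (mem_gamma_zero a) le_rfl))

theorem gamma_le_closure_layerGens {S : Set B}
    (hS : ∀ T : Set B, IsSubSkewBrace T → S ⊆ T → T = Set.univ) (n : ℕ) :
    gamma B n ≤ AddSubgroup.closure (layerGens S n ∪ gamma B (n + 1)) := by
  induction n using Nat.strong_induction_on with
  | _ n ih =>
    cases n with
    | zero =>
      rw [layerGens]
      refine fun x _ => Set.eq_univ_iff_forall.1 (hS _ (isSubSkewBrace_of_gamma_one_le ?_) ?_) x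
      · exact fun z hz => AddSubgroup.subset_closure (Or.inr hz)
      · exact fun s hs => AddSubgroup.subset_closure (Or.inl hs)
    | succ n =>
      rw [gamma_succ_le_iff]
      intro i hi x hx y hy
      have h := starOp_addComm_mem_closure_starCommSet (layerGens_subset_gamma S i)
        (layerGens_subset_gamma S (n - i)) (ih i (by omega)) (ih _ (by omega)) hx hy
      have hle : AddSubgroup.closure (starCommSet (layerGens S i) (layerGens S (n - i)) ∪
          gamma B (i + (n - i) + 2)) ≤
            AddSubgroup.closure (layerGens S (n + 1) ∪ gamma B (n + 1 + 1)) := by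
        refine AddSubgroup.closure_mono (Set.union_subset_union ?_ ?_)
        · rw [layerGens_succ]
          exact Set.subset_iUnion_of_subset ⟨i, by omega⟩ subset_rfl
        · exact gamma_antitone (by omega)
      exact ⟨hle h.1, hle h.2⟩

theorem eq_univ_of_gamma_descent {X : Set B} {m : ℕ} (hm : gamma B m = ⊥) (hX : (0 : B) ∈ X)
    (step : ∀ l < m, (gamma B (l + 1) : Set B) ⊆ X → (gamma B l : Set B) ⊆ X) :
    X = Set.univ := by
  have h : ∀ l ≤ m, (gamma B l : Set B) ⊆ X := fun l hl =>
    Nat.decreasingInduction (motive := fun l _ => (gamma B l : Set B) ⊆ X)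
      (fun k hk ih => step k hk ih) (by simpa [hm] using hX) hl
  simpa [gamma_zero] using h 0 (Nat.zero_le m)

theorem addGroup_fg_of_sbFinitelyGenerated (hann : AnnNilpotent B)
    (h : SBFinitelyGenerated B) : AddGroup.FG B := by
  obtain ⟨S, hSfin, hS⟩ := h
  obtain ⟨m, hm⟩ := exists_gamma_eq_bot hann
  set U := ⋃ l ∈ Set.Iio m, layerGens S l
  refine AddGroup.fg_iff.2 ⟨U, SetLike.coe_injective ?_,
    (Set.finite_Iio m).biUnion fun l _ => layerGens_finite hSfin l⟩
  refine eq_univ_of_gamma_descent hm (AddSubgroup.zero_mem _) fun l hl ih => ?_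
  refine (gamma_le_closure_layerGens hS l).trans ((AddSubgroup.closure_le _).2 ?_)
  exact Set.union_subset ((Set.subset_biUnion_of_mem (u := layerGens S)
    (show l ∈ Set.Iio m from hl)).trans AddSubgroup.subset_closure) ih

theorem group_fg_of_sbFinitelyGenerated (hann : AnnNilpotent B)
    (h : SBFinitelyGenerated B) : Group.FG B := by
  obtain ⟨S, hSfin, hS⟩ := h
  obtain ⟨m, hm⟩ := exists_gamma_eq_bot hann
  set U := ⋃ l ∈ Set.Iio m, layerGens S l
  refine Group.fg_iff.2 ⟨U, SetLike.coe_injective ?_,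
    (Set.finite_Iio m).biUnion fun l _ => layerGens_finite hSfin l⟩
  refine eq_univ_of_gamma_descent hm (one_eq_zero (B := B) ▸ Subgroup.one_mem _) fun l hl ih => ?_
  refine SetLike.coe_subset_coe.2 (gamma_le_closure_layerGens hS l) |>.trans <|
    (addClosure_subset_closure_of_subset_gamma (layerGens_subset_gamma S l)).trans ?_
  refine (Subgroup.closure_le _).2 (Set.union_subset ?_ ih)
  exact (Set.subset_biUnion_of_mem (u := layerGens S)
    (show l ∈ Set.Iio m from hl)).trans Subgroup.subset_closure

theorem sbFinitelyGenerated_of_addGroup_fg (h : AddGroup.FG B) : SBFinitelyGenerated B := by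
  obtain ⟨S, hS, hSfin⟩ := AddGroup.fg_iff.1 h
  refine ⟨S, hSfin, fun T hT hST => Set.eq_univ_of_forall fun x => ?_⟩
  let K : AddSubgroup B :=
    { carrier := T
      zero_mem' := hT.1
      add_mem' := fun ha hb => hT.2.1 _ ha _ hb
      neg_mem' := fun ha => hT.2.2.1 _ ha }
  exact (AddSubgroup.closure_le K).2 hST (hS ▸ AddSubgroup.mem_top x)

theorem sbFinitelyGenerated_of_group_fg (h : Group.FG B) : SBFinitelyGenerated B := by
  obtain ⟨S, hS, hSfin⟩ := Group.fg_iff.1 h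
  refine ⟨S, hSfin, fun T hT hST => Set.eq_univ_of_forall fun x => ?_⟩
  let K : Subgroup B :=
    { carrier := T
      one_mem' := one_eq_zero (B := B) ▸ hT.1
      mul_mem' := fun ha hb => hT.2.2.2.1 _ ha _ hb
      inv_mem' := fun ha => hT.2.2.2.2 _ ha }
  exact (Subgroup.closure_le K).2 hST (hS ▸ Subgroup.mem_top x)

/-- Corollary 3.4: for an annihilator nilpotent skew brace the following are
equivalent: (1) `B` is finitely generated as a skew brace; (2) `(B,+)` is
finitely generated; (3) `(B,∘)` is finitely generated. -/
theorem stmt8 {B : Type*} [SkewBrace B] (hann : AnnNilpotent B) :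
    (SBFinitelyGenerated B ↔ AddGroup.FG B) ∧
    (SBFinitelyGenerated B ↔ Group.FG B) :=
  ⟨⟨addGroup_fg_of_sbFinitelyGenerated hann, sbFinitelyGenerated_of_addGroup_fg⟩,
    ⟨group_fg_of_sbFinitelyGenerated hann, sbFinitelyGenerated_of_group_fg⟩⟩

end SkewBrace
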